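/- arXiv:1109.0703 — 2 statements merged into one kernel-verified Lean document; each statement's English description precedes it below -/
import Mathlib

section
/- Let y₀ ∈ ℝ, b > 0, ε > 0, and let p : ℝ → ℝ be continuous, strictly positive, strictly decreasing and strictly convex on [y₀, ∞). Suppose Y ≥ y₀ satisfies ∫_{y₀}^{Y} p(y) dy = b. If h > 0 and natural numbers n₁ < n₂ with n₁ ≥ 1 satisfy S_t(h,n₁) ≤ b ≤ S_l(h,n₂) and h·(n₂ − n₁) ≤ ε, then the midpoint approximation satisfies |Y − (y₀ + (h/2)·(n₁ + n₂))| < ε/2, and moreover |Y − (y₀ + h·n₁)| < ε and |Y − (y₀ + h·n₂)| < ε. -/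
open Set Finset

/-- Lower rectangular sum: S_l(h,N) = ∑_{i=1}^{N} h·p(y₀ + i·h). -/
noncomputable def lowerSum (p : ℝ → ℝ) (y₀ h : ℝ) (N : ℕ) : ℝ :=
  ∑ i ∈ Finset.Icc 1 N, h * p (y₀ + (i : ℝ) * h)

/-- Trapezoidal sum: S_t(h,N) = ∑_{i=1}^{N} (h/2)·(p(y₀+(i−1)·h) + p(y₀+i·h)). -/
noncomputable def trapSum (p : ℝ → ℝ) (y₀ h : ℝ) (N : ℕ) : ℝ :=
  ∑ i ∈ Finset.Icc 1 N, (h / 2) * (p (y₀ + ((i : ℝ) - 1) * h) + p (y₀ + (i : ℝ) * h))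

/-!
On each grid cell `[y₀ + k h, y₀ + (k + 1) h]`, strict convexity puts `p` strictly below its chord
and strict decrease puts it strictly above its value at the right endpoint, so the trapezoidal sum
strictly overestimates and the lower sum strictly underestimates `∫_{y₀}^{y₀ + N h} p`. As `p > 0`,
the integral is increasing in its upper limit, so `S_t(h, n₁) ≤ b ≤ S_l(h, n₂)` traps `Y` strictly
between the grid points `y₀ + n₁ h` and `y₀ + n₂ h`, at distance at most `ε` apart.
-/

lemma StrictConvexOn.lt_chord {s : Set ℝ} {f : ℝ → ℝ} (hf : StrictConvexOn ℝ s f) {a b x : ℝ}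
    (ha : a ∈ s) (hb : b ∈ s) (hx : x ∈ Ioo a b) :
    f x < ((b - x) * f a + (x - a) * f b) / (b - a) := by
  obtain ⟨hax, hxb⟩ := hx
  have hab : 0 < b - a := by linarith
  have hcomb : ((b - x) / (b - a)) • a + ((x - a) / (b - a)) • b = x := by
    simp only [smul_eq_mul]; field_simp; ring
  have key := hf.2 ha hb (by linarith) (div_pos (sub_pos.2 hxb) hab) (div_pos (sub_pos.2 hax) hab)
    (by field_simp; ring)
  rw [hcomb] at key
  simp only [smul_eq_mul] at key
  calc f x < _ := key
    _ = _ := by field_simp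

lemma integral_chord {a b : ℝ} (hab : a < b) (u v : ℝ) :
    ∫ x in a..b, ((b - x) * u + (x - a) * v) / (b - a) = (b - a) / 2 * (u + v) := by
  have hba : b - a ≠ 0 := sub_ne_zero.2 hab.ne'
  have haff : (fun x => ((b - x) * u + (x - a) * v) / (b - a))
      = fun x => (b * u - a * v) / (b - a) + (v - u) / (b - a) * x := by
    ext x; field_simp; ring
  rw [haff, intervalIntegral.integral_add intervalIntegrable_const
    (intervalIntegral.intervalIntegrable_id.const_mul _), intervalIntegral.integral_const,
    intervalIntegral.integral_const_mul, integral_id, smul_eq_mul]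
  field_simp
  ring

theorem StrictConvexOn.integral_lt_trapezoid {f : ℝ → ℝ} {a b : ℝ} (hab : a < b)
    (hc : ContinuousOn f (Icc a b)) (hf : StrictConvexOn ℝ (Icc a b) f) :
    ∫ x in a..b, f x < (b - a) / 2 * (f a + f b) := by
  have ha := Set.left_mem_Icc.2 hab.le
  have hb := Set.right_mem_Icc.2 hab.le
  rw [← integral_chord hab]
  refine intervalIntegral.integral_lt_integral_of_continuousOn_of_le_of_exists_lt hab hc
    (by fun_prop (disch := exact sub_ne_zero.2 hab.ne')) (fun x hx => ?_)
    ⟨(a + b) / 2, ⟨by linarith, by linarith⟩, hf.lt_chord ha hb ⟨by linarith, by linarith⟩⟩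
  rcases hx.2.eq_or_lt with rfl | hxb
  · rw [sub_self, zero_mul, zero_add, mul_div_cancel_left₀ _ (sub_ne_zero.2 hab.ne')]
  · exact (hf.lt_chord ha hb ⟨hx.1, hxb⟩).le

theorem StrictAntiOn.mul_lt_integral {f : ℝ → ℝ} {a b : ℝ} (hab : a < b)
    (hc : ContinuousOn f (Icc a b)) (hf : StrictAntiOn f (Icc a b)) :
    (b - a) * f b < ∫ x in a..b, f x := by
  have ha := Set.left_mem_Icc.2 hab.le
  have hb := Set.right_mem_Icc.2 hab.le
  simpa using intervalIntegral.integral_lt_integral_of_continuousOn_of_le_of_exists_lt hab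
    continuousOn_const hc (fun x hx => hf.antitoneOn (Ioc_subset_Icc_self hx) hb hx.2)
    ⟨a, ha, hf ha hb hab⟩

theorem monotoneOn_integral_of_nonneg {f : ℝ → ℝ} {a : ℝ} (hc : ContinuousOn f (Ici a))
    (hf : ∀ x ∈ Ici a, 0 ≤ f x) :
    MonotoneOn (fun u => ∫ x in a..u, f x) (Ici a) := by
  intro u hu v hv huv
  refine intervalIntegral.integral_mono_interval le_rfl hu huv ?_
    ((hc.mono Icc_subset_Ici_self).intervalIntegrable_of_Icc hv)
  exact (MeasureTheory.ae_restrict_iff' measurableSet_Ioc).2 (.of_forall fun x hx => hf x hx.1.le)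

section GridSums

variable {p : ℝ → ℝ} {y₀ h : ℝ}

lemma Icc_cell_subset_Ici (hh : 0 ≤ h) (k : ℕ) :
    Icc (y₀ + k * h) (y₀ + (k + 1) * h) ⊆ Ici y₀ :=
  fun _ hx => le_trans (by simp only [le_add_iff_nonneg_right]; positivity) hx.1

lemma integral_eq_sum_cells (hc : ContinuousOn p (Ici y₀)) (hh : 0 ≤ h) (N : ℕ) :
    ∫ y in y₀..y₀ + N * h, p y = ∑ k ∈ range N, ∫ y in y₀ + k * h..y₀ + (k + 1) * h, p y := by
  have hint : ∀ k < N,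
      IntervalIntegrable p MeasureTheory.volume (y₀ + k * h) (y₀ + ((k + 1 : ℕ) : ℝ) * h) :=
    fun k _ => (hc.mono (by simpa using Icc_cell_subset_Ici hh k)).intervalIntegrable_of_Icc
      (by push_cast; linarith)
  simpa using (intervalIntegral.sum_integral_adjacent_intervals hint).symm

lemma trapSum_eq_sum_range (N : ℕ) :
    trapSum p y₀ h N = ∑ k ∈ range N, h / 2 * (p (y₀ + k * h) + p (y₀ + (k + 1) * h)) := by
  rw [trapSum, ← Finset.Ico_add_one_right_eq_Icc, Finset.sum_Ico_eq_sum_range]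
  simp [add_comm]

lemma lowerSum_eq_sum_range (N : ℕ) :
    lowerSum p y₀ h N = ∑ k ∈ range N, h * p (y₀ + (k + 1) * h) := by
  rw [lowerSum, ← Finset.Ico_add_one_right_eq_Icc, Finset.sum_Ico_eq_sum_range]
  simp [add_comm]

lemma integral_lt_trapSum (hc : ContinuousOn p (Ici y₀)) (hconv : StrictConvexOn ℝ (Ici y₀) p)
    (hh : 0 < h) {N : ℕ} (hN : N ≠ 0) : ∫ y in y₀..y₀ + N * h, p y < trapSum p y₀ h N := by
  rw [integral_eq_sum_cells hc hh.le, trapSum_eq_sum_range]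
  refine sum_lt_sum_of_nonempty (nonempty_range_iff.2 hN) fun k _ => ?_
  have hcell := Icc_cell_subset_Ici (y₀ := y₀) hh.le k
  have hk := (hconv.subset hcell (convex_Icc _ _)).integral_lt_trapezoid (by linarith)
    (hc.mono hcell)
  rwa [show y₀ + (k + 1) * h - (y₀ + k * h) = h by ring] at hk

lemma lowerSum_lt_integral (hc : ContinuousOn p (Ici y₀)) (hanti : StrictAntiOn p (Ici y₀))
    (hh : 0 < h) {N : ℕ} (hN : N ≠ 0) : lowerSum p y₀ h N < ∫ y in y₀..y₀ + N * h, p y := by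
  rw [integral_eq_sum_cells hc hh.le, lowerSum_eq_sum_range]
  refine sum_lt_sum_of_nonempty (nonempty_range_iff.2 hN) fun k _ => ?_
  have hcell := Icc_cell_subset_Ici (y₀ := y₀) hh.le k
  have hk := (hanti.mono hcell).mul_lt_integral (by linarith) (hc.mono hcell)
  rwa [show y₀ + (k + 1) * h - (y₀ + k * h) = h by ring] at hk

end GridSums

theorem stmt_3_general (y₀ b ε : ℝ) (p : ℝ → ℝ)
    (hc : ContinuousOn p (Set.Ici y₀))
    (hpos : ∀ y ∈ Set.Ici y₀, 0 < p y)
    (hanti : StrictAntiOn p (Set.Ici y₀))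
    (hconv : StrictConvexOn ℝ (Set.Ici y₀) p)
    (Y : ℝ) (hY : y₀ ≤ Y) (hint : (∫ y in y₀..Y, p y) = b)
    (h : ℝ) (hh : 0 < h) (n₁ n₂ : ℕ) (hn₁ : 1 ≤ n₁) (hlt : n₁ < n₂)
    (ht : trapSum p y₀ h n₁ ≤ b) (hl : b ≤ lowerSum p y₀ h n₂)
    (hgap : h * ((n₂ : ℝ) - (n₁ : ℝ)) ≤ ε) :
    |Y - (y₀ + (h / 2) * ((n₁ : ℝ) + (n₂ : ℝ)))| < ε / 2 ∧
      |Y - (y₀ + h * (n₁ : ℝ))| < ε ∧ |Y - (y₀ + h * (n₂ : ℝ))| < ε := by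
  have hF := monotoneOn_integral_of_nonneg hc fun y hy => (hpos y hy).le
  have hgrid : ∀ n : ℕ, y₀ + n * h ∈ Ici y₀ := fun n => by
    simp only [Set.mem_Ici, le_add_iff_nonneg_right]; positivity
  have hbelow : y₀ + n₁ * h < Y := hF.reflect_lt (hgrid n₁) hY <| by
    simpa only [hint] using (integral_lt_trapSum hc hconv hh (by omega)).trans_le ht
  have habove : Y < y₀ + n₂ * h := hF.reflect_lt hY (hgrid n₂) <| by
    simpa only [hint] using hl.trans_lt (lowerSum_lt_integral hc hanti hh (by omega))
  refine ⟨?_, ?_, ?_⟩ <;> rw [abs_lt] <;> constructor <;> linarith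

theorem stmt_3 (y₀ b ε : ℝ) (hb : 0 < b) (hε : 0 < ε) (p : ℝ → ℝ)
    (hc : ContinuousOn p (Set.Ici y₀))
    (hpos : ∀ y ∈ Set.Ici y₀, 0 < p y)
    (hanti : StrictAntiOn p (Set.Ici y₀))
    (hconv : StrictConvexOn ℝ (Set.Ici y₀) p)
    (Y : ℝ) (hY : y₀ ≤ Y) (hint : (∫ y in y₀..Y, p y) = b)
    (h : ℝ) (hh : 0 < h) (n₁ n₂ : ℕ) (hn₁ : 1 ≤ n₁) (hlt : n₁ < n₂)
    (ht : trapSum p y₀ h n₁ ≤ b) (hl : b ≤ lowerSum p y₀ h n₂)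
    (hgap : h * ((n₂ : ℝ) - (n₁ : ℝ)) ≤ ε) :
    |Y - (y₀ + (h / 2) * ((n₁ : ℝ) + (n₂ : ℝ)))| < ε / 2 ∧
      |Y - (y₀ + h * (n₁ : ℝ))| < ε ∧ |Y - (y₀ + h * (n₂ : ℝ))| < ε :=
  stmt_3_general y₀ b ε p hc hpos hanti hconv Y hY hint h hh n₁ n₂ hn₁ hlt ht hl hgap
end

section
/- (Simplified termination criterion) Let y₀ ∈ ℝ, b > 0, ε > 0, and let p : ℝ → ℝ be strictly decreasing and strictly positive on [y₀, ∞). Suppose the least natural number N with S_l(ε,N) ≥ b exists and equals n₂¹, and for an integer j ≥ 2 the least N with S_l(ε/j,N) ≥ b exists, equals n₂, and satisfies n₂ > j. If j ≥ (1/2)·(1 + p(y₀)/p(y₀ + ε·n₂¹)), then S_t(ε/j, n₂ − j) ≤ b. -/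
open Set Finset

lemma lowerSum_succ (p : ℝ → ℝ) (y₀ h : ℝ) (N : ℕ) :
    lowerSum p y₀ h (N+1) = lowerSum p y₀ h N + h * p (y₀ + ((N:ℝ)+1) * h) := by
  unfold lowerSum
  rw [Finset.sum_Icc_succ_top (by omega : 1 ≤ N+1)]
  congr 2
  push_cast
  ring

lemma trapSum_succ (p : ℝ → ℝ) (y₀ h : ℝ) (N : ℕ) :
    trapSum p y₀ h (N+1) = trapSum p y₀ h N
      + (h/2) * (p (y₀ + (N:ℝ) * h) + p (y₀ + ((N:ℝ)+1) * h)) := by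
  unfold trapSum
  rw [Finset.sum_Icc_succ_top (by omega : 1 ≤ N+1)]
  congr 3 <;> push_cast <;> ring

lemma trapSum_eq (p : ℝ → ℝ) (y₀ h : ℝ) (N : ℕ) :
    trapSum p y₀ h N = lowerSum p y₀ h N + (h/2) * (p y₀ - p (y₀ + (N:ℝ) * h)) := by
  induction N with
  | zero => simp [trapSum, lowerSum]
  | succ n ih =>
    rw [trapSum_succ, lowerSum_succ, ih]
    push_cast
    ring

lemma lowerSum_split (p : ℝ → ℝ) (y₀ h : ℝ) {m N : ℕ} (hmN : m ≤ N) :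
    lowerSum p y₀ h N = lowerSum p y₀ h m
      + ∑ i ∈ Finset.Ioc m N, h * p (y₀ + (i : ℝ) * h) := by
  unfold lowerSum
  rw [show (1:ℕ) = 0 + 1 from rfl, Finset.Icc_add_one_left_eq_Ioc, Finset.Icc_add_one_left_eq_Ioc,
    Finset.sum_Ioc_consecutive _ (Nat.zero_le m) hmN]

lemma lowerSum_refine (p : ℝ → ℝ) (y₀ ε : ℝ) (hε : 0 < ε)
    (hanti : AntitoneOn p (Set.Ici y₀)) {j : ℕ} (hj : 1 ≤ j) (N : ℕ) :
    lowerSum p y₀ ε N ≤ lowerSum p y₀ (ε / (j:ℝ)) (j * N) := by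
  have hj0 : (0:ℝ) < (j:ℝ) := by exact_mod_cast hj
  induction N with
  | zero => simp [lowerSum]
  | succ n ih =>
    rw [lowerSum_succ, show j * (n+1) = j * n + j by ring,
      lowerSum_split p y₀ (ε/(j:ℝ)) (Nat.le_add_right (j*n) j)]
    refine add_le_add ih ?_
    have key : ∀ i ∈ Finset.Ioc (j*n) (j*n+j),
        (ε/(j:ℝ)) * p (y₀ + ((n:ℝ)+1) * ε) ≤ (ε/(j:ℝ)) * p (y₀ + (i:ℝ) * (ε/(j:ℝ))) := by
      intro i hi
      rw [Finset.mem_Ioc] at hi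
      have h1 : (i:ℝ) * (ε/(j:ℝ)) ≤ ((n:ℝ)+1) * ε := by
        rw [mul_div_assoc', div_le_iff₀ hj0]
        have hij : (i:ℝ) ≤ (j:ℝ) * (n:ℝ) + (j:ℝ) := by
          exact_mod_cast hi.2
        nlinarith [hε.le]
      have m1 : y₀ + (i:ℝ) * (ε/(j:ℝ)) ∈ Set.Ici y₀ := by
        have : 0 ≤ (i:ℝ) * (ε/(j:ℝ)) := by positivity
        simp [Set.mem_Ici]; linarith
      have m2 : y₀ + ((n:ℝ)+1) * ε ∈ Set.Ici y₀ := by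
        have : 0 ≤ ((n:ℝ)+1) * ε := by positivity
        simp [Set.mem_Ici]; linarith
      have := hanti m1 m2 (by linarith)
      have hef : 0 ≤ ε / (j:ℝ) := by positivity
      exact mul_le_mul_of_nonneg_left this hef
    calc ε * p (y₀ + ((n:ℝ)+1) * ε)
        = (Finset.Ioc (j*n) (j*n+j)).card • ((ε/(j:ℝ)) * p (y₀ + ((n:ℝ)+1) * ε)) := by
          rw [Nat.card_Ioc]
          simp only [Nat.add_sub_cancel_left, nsmul_eq_mul]
          field_simp
      _ ≤ ∑ i ∈ Finset.Ioc (j*n) (j*n+j), (ε/(j:ℝ)) * p (y₀ + (i:ℝ) * (ε/(j:ℝ))) :=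
          Finset.card_nsmul_le_sum _ _ _ key

theorem stmt_13 (y₀ b ε : ℝ) (hb : 0 < b) (hε : 0 < ε)
    (p : ℝ → ℝ)
    (hanti : StrictAntiOn p (Set.Ici y₀))
    (hpos : ∀ y ∈ Set.Ici y₀, 0 < p y)
    (n₂₁ : ℕ) (h₁ : IsLeast {N : ℕ | b ≤ lowerSum p y₀ ε N} n₂₁)
    (j : ℕ) (hj : 2 ≤ j)
    (n₂ : ℕ) (h₂ : IsLeast {N : ℕ | b ≤ lowerSum p y₀ (ε / (j : ℝ)) N} n₂)
    (hn₂ : j < n₂)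
    (hcrit : (j : ℝ) ≥ (1 / 2) * (1 + p y₀ / p (y₀ + ε * (n₂₁ : ℝ)))) :
    trapSum p y₀ (ε / (j : ℝ)) (n₂ - j) ≤ b := by

  have hj0 : (0:ℝ) < (j:ℝ) := by exact_mod_cast (by omega : 0 < j)
  set h := ε / (j:ℝ) with hh_def
  have hh : 0 < h := by positivity
  have hanti' : AntitoneOn p (Set.Ici y₀) := hanti.antitoneOn
  have hmem : ∀ c : ℝ, 0 ≤ c → y₀ + c ∈ Set.Ici y₀ := by
    intro c hc; simp [Set.mem_Ici]; linarith
  -- n₂ ≤ j * n₂₁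
  have hle : n₂ ≤ j * n₂₁ :=
    h₂.2 (le_trans h₁.1 (lowerSum_refine p y₀ ε hε hanti' (by omega) n₂₁))
  -- lowerSum h (n₂-1) < b
  have hlt : lowerSum p y₀ h (n₂ - 1) < b := by
    by_contra hcon
    push_neg at hcon
    have := h₂.2 hcon
    omega
  set P₁ := p (y₀ + ((n₂:ℝ) - 1) * h) with hP₁
  set P₂ := p (y₀ + ((n₂ - j : ℕ):ℝ) * h) with hP₂
  set Pε := p (y₀ + ε * (n₂₁:ℝ)) with hPε
  have hn1 : (1:ℝ) ≤ (n₂:ℝ) := by exact_mod_cast (by omega : 1 ≤ n₂)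
  have mP₁ : y₀ + ((n₂:ℝ) - 1) * h ∈ Set.Ici y₀ := hmem _ (by nlinarith)
  have mP₂ : y₀ + ((n₂ - j : ℕ):ℝ) * h ∈ Set.Ici y₀ := hmem _ (by positivity)
  have mPε : y₀ + ε * (n₂₁:ℝ) ∈ Set.Ici y₀ := hmem _ (by positivity)
  have hPεpos : 0 < Pε := hpos _ mPε
  have hP₁pos : 0 < P₁ := hpos _ mP₁
  -- Pε ≤ P₁
  have hεP : Pε ≤ P₁ := by
    apply hanti' mP₁ mPε
    have : ((n₂:ℝ) - 1) * h ≤ ε * (n₂₁:ℝ) := by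
      rw [hh_def, mul_div_assoc', div_le_iff₀ hj0]
      have : (n₂:ℝ) ≤ (j:ℝ) * (n₂₁:ℝ) := by exact_mod_cast hle
      nlinarith
    linarith
  -- P₁ ≤ P₂
  have h12 : P₁ ≤ P₂ := by
    apply hanti' mP₂ mP₁
    have : ((n₂ - j : ℕ):ℝ) ≤ (n₂:ℝ) - 1 := by
      have : ((n₂ - j : ℕ):ℝ) = (n₂:ℝ) - (j:ℝ) := by
        push_cast [Nat.cast_sub (le_of_lt hn₂)]; ring
      rw [this]
      have : (2:ℝ) ≤ (j:ℝ) := by exact_mod_cast hj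
      linarith
    nlinarith
  -- p y₀ ≤ (2j-1) * Pε
  have hpy : p y₀ ≤ (2*(j:ℝ) - 1) * Pε := by
    have h1 : p y₀ / Pε ≤ 2*(j:ℝ) - 1 := by linarith
    have := (div_le_iff₀ hPεpos).mp h1
    linarith
  -- sum bound
  have hsplit := lowerSum_split p y₀ h (show n₂ - j ≤ n₂ - 1 by omega)
  have hsum_ge : ((j:ℝ) - 1) * (h * P₁)
      ≤ ∑ i ∈ Finset.Ioc (n₂-j) (n₂-1), h * p (y₀ + (i:ℝ)*h) := by
    have key : ∀ i ∈ Finset.Ioc (n₂-j) (n₂-1), h * P₁ ≤ h * p (y₀ + (i:ℝ)*h) := by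
      intro i hi
      rw [Finset.mem_Ioc] at hi
      have hi' : (i:ℝ) ≤ (n₂:ℝ) - 1 := by
        have : (i:ℝ) ≤ ((n₂ - 1 : ℕ):ℝ) := by exact_mod_cast hi.2
        have : ((n₂ - 1 : ℕ):ℝ) = (n₂:ℝ) - 1 := by
          push_cast [Nat.cast_sub (by omega : 1 ≤ n₂)]; ring
        linarith [show (i:ℝ) ≤ ((n₂ - 1 : ℕ):ℝ) by exact_mod_cast hi.2]
      have mi : y₀ + (i:ℝ) * h ∈ Set.Ici y₀ := hmem _ (by positivity)
      have := hanti' mi mP₁ (by nlinarith)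
      exact mul_le_mul_of_nonneg_left this hh.le
    have hcard : (Finset.Ioc (n₂-j) (n₂-1)).card = j - 1 := by
      rw [Nat.card_Ioc]; omega
    have := Finset.card_nsmul_le_sum (Finset.Ioc (n₂-j) (n₂-1))
      (fun i => h * p (y₀+(i:ℝ)*h)) (h*P₁) key
    rw [hcard, nsmul_eq_mul] at this
    have hjc : ((j - 1 : ℕ):ℝ) = (j:ℝ) - 1 := by
      push_cast [Nat.cast_sub (by omega : 1 ≤ j)]; ring
    rw [hjc] at this
    convert this using 2
  rw [trapSum_eq]
  have hlow : lowerSum p y₀ h (n₂ - j) ≤ b - ((j:ℝ) - 1) * (h * P₁) := by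
    rw [hsplit] at hlt
    linarith
  have hj2 : (2:ℝ) ≤ (j:ℝ) := by exact_mod_cast hj
  nlinarith [mul_le_mul_of_nonneg_left (hεP) (by linarith : (0:ℝ) ≤ 2*(j:ℝ)-1),
    mul_le_mul_of_nonneg_left (show p y₀ - P₂ ≤ (2*(j:ℝ)-2)*P₁ by nlinarith) (by positivity : (0:ℝ) ≤ h/2)]
end
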